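/- Let ν : ℝ³ → ℝ be continuously differentiable, q : ℝ³ → ℝ twice continuously differentiable, and u : ℝ³ → ℝ³ twice continuously differentiable, compactly supported, with ∇·u = 0 everywhere. Then ∫_{ℝ³} ∇q · (∇·(2ν∇^s u)) dx = ∫_{ℝ³} ∇q · (2(∇u)ᵀ∇ν) dx, i.e. ∫ Σᵢ ∂ᵢq Σⱼ ∂ⱼ(ν(∂ⱼuᵢ + ∂ᵢuⱼ)) dx = ∫ Σᵢ ∂ᵢq · 2 Σⱼ ∂ᵢuⱼ ∂ⱼν dx. (This is the fully consistent rewriting of the viscous residual term underlying the boundary vorticity stabilisation, in the boundary-free case.) -/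

import Mathlib

open MeasureTheory

/-- Partial derivative `∂ⱼ f` of a scalar field `f : ℝ³ → ℝ`. -/
noncomputable def pd (j : Fin 3) (f : (Fin 3 → ℝ) → ℝ) (x : Fin 3 → ℝ) : ℝ :=
  fderiv ℝ f x (Pi.single j 1)

private lemma contDiff_pd {f : (Fin 3 → ℝ) → ℝ} {n : ℕ} (hf : ContDiff ℝ (n + 1 : ℕ) f)
    (j : Fin 3) : ContDiff ℝ n (pd j f) := by
  have h1 : ContDiff ℝ n (fun x => fderiv ℝ f x) :=
    hf.fderiv_right (by exact_mod_cast le_refl ((n : ℕ∞) + 1))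
  exact h1.clm_apply contDiff_const

private lemma pd_mul {f g : (Fin 3 → ℝ) → ℝ} (j : Fin 3) {x : Fin 3 → ℝ}
    (hf : DifferentiableAt ℝ f x) (hg : DifferentiableAt ℝ g x) :
    pd j (fun y => f y * g y) x = pd j f x * g x + f x * pd j g x := by
  unfold pd
  rw [fderiv_fun_mul hf hg]
  simp only [ContinuousLinearMap.add_apply, ContinuousLinearMap.smul_apply, smul_eq_mul]
  ring

private lemma pd_add {f g : (Fin 3 → ℝ) → ℝ} (j : Fin 3) {x : Fin 3 → ℝ}
    (hf : DifferentiableAt ℝ f x) (hg : DifferentiableAt ℝ g x) :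
    pd j (fun y => f y + g y) x = pd j f x + pd j g x := by
  unfold pd
  rw [fderiv_fun_add hf hg]
  simp

private lemma pd_sum {ι : Type*} (s : Finset ι) {f : ι → (Fin 3 → ℝ) → ℝ} (j : Fin 3)
    {x : Fin 3 → ℝ} (hf : ∀ i ∈ s, DifferentiableAt ℝ (f i) x) :
    pd j (fun y => ∑ i ∈ s, f i y) x = ∑ i ∈ s, pd j (f i) x := by
  unfold pd
  rw [fderiv_fun_sum hf]
  simp

private lemma pd_comm {f : (Fin 3 → ℝ) → ℝ} (hf : ContDiff ℝ 2 f) (i j : Fin 3)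
    (x : Fin 3 → ℝ) : pd i (pd j f) x = pd j (pd i f) x := by
  have hd : ∀ y, HasFDerivAt f (fderiv ℝ f y) y := fun y =>
    ((hf.differentiable (by norm_num)) y).hasFDerivAt
  have hd2 : DifferentiableAt ℝ (fderiv ℝ f) x :=
    ((hf.fderiv_right (m := 1) (by norm_num)).differentiable one_ne_zero) x
  have hsymm := second_derivative_symmetric hd hd2.hasFDerivAt (Pi.single i 1) (Pi.single j 1)
  unfold pd
  rw [fderiv_clm_apply hd2 (differentiableAt_const _),
    fderiv_clm_apply hd2 (differentiableAt_const _)]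
  simpa using hsymm

private lemma hasCompactSupport_pd {f : (Fin 3 → ℝ) → ℝ} (hf : HasCompactSupport f)
    (j : Fin 3) : HasCompactSupport (pd j f) :=
  hf.fderiv_apply ℝ (Pi.single j 1)

private lemma hasCompactSupport_sum {ι : Type*} (s : Finset ι) {f : ι → (Fin 3 → ℝ) → ℝ}
    (h : ∀ i ∈ s, HasCompactSupport (f i)) :
    HasCompactSupport (fun x => ∑ i ∈ s, f i x) := by
  classical
  induction s using Finset.induction with
  | empty => simpa [Function.support] using (by simp [HasCompactSupport, tsupport] :
      HasCompactSupport (fun _ : Fin 3 → ℝ => (0 : ℝ)))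
  | insert _ _ hx ih =>
      simp only [Finset.sum_insert hx]
      exact (h _ (Finset.mem_insert_self _ _)).add
        (ih fun i hi => h i (Finset.mem_insert_of_mem hi))

private lemma integral_pd_eq_zero {f : (Fin 3 → ℝ) → ℝ} (hf : ContDiff ℝ 1 f)
    (hs : HasCompactSupport f) (j : Fin 3) : ∫ x, pd j f x = 0 := by
  have hfi : Integrable f := hf.continuous.integrable_of_hasCompactSupport hs
  have hfd : Integrable (fun x => fderiv ℝ f x (Pi.single j 1)) :=
    ((contDiff_pd (n := 0) hf j).continuous).integrable_of_hasCompactSupport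
      (hasCompactSupport_pd hs j)
  have h := integral_mul_fderiv_eq_neg_fderiv_mul_of_integrable (μ := volume)
      (f := fun _ : Fin 3 → ℝ => (1 : ℝ)) (g := f) (v := Pi.single j 1)
      (by simpa using (integrable_zero _ _ _)) (by simpa using hfd) (by simpa using hfi)
      (fun x _ => differentiableAt_const _) (fun x _ => hf.differentiable one_ne_zero x)
  simpa [pd] using h

/-- Fully consistent rewriting of the viscous residual term of the boundary vorticity
stabilisation (boundary-free case): for `ν` C¹, `q` C², `u` C² compactly supported and
divergence-free, `∫ ∇q · (∇·(2ν∇ˢu)) = ∫ ∇q · (2(∇u)ᵀ∇ν)`. -/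
theorem integral_gradq_dot_stress_divergence
    (ν : (Fin 3 → ℝ) → ℝ) (hν : ContDiff ℝ 1 ν)
    (q : (Fin 3 → ℝ) → ℝ) (hq : ContDiff ℝ 2 q)
    (u : (Fin 3 → ℝ) → Fin 3 → ℝ) (hu : ContDiff ℝ 2 u)
    (hsupp : HasCompactSupport u)
    (hdiv : ∀ x, ∑ j, pd j (fun z => u z j) x = 0) :
    ∫ x, ∑ i, pd i q x *
        (∑ j, pd j (fun y => ν y * (pd j (fun z => u z i) y + pd i (fun z => u z j) y)) x)
      = ∫ x, ∑ i, pd i q x * (2 * ∑ j, pd i (fun z => u z j) x * pd j ν x) := by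
  classical
  have hui : ∀ i, ContDiff ℝ 2 (fun z => u z i) := fun i => contDiff_pi.mp hu i
  have hcsu : ∀ i, HasCompactSupport (fun z => u z i) := fun i =>
    hsupp.comp_left (g := fun v : Fin 3 → ℝ => v i) rfl
  have hdq1 : ∀ i, ContDiff ℝ 1 (pd i q) := fun i => contDiff_pd (n := 1) hq i
  have hdu1 : ∀ i j, ContDiff ℝ 1 (pd j (fun z => u z i)) := fun i j =>
    contDiff_pd (n := 1) (hui i) j
  have Hν : ∀ x, DifferentiableAt ℝ ν x := fun x => (hν.differentiable one_ne_zero) x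
  have Hq : ∀ i x, DifferentiableAt ℝ (pd i q) x := fun i x =>
    ((hdq1 i).differentiable one_ne_zero) x
  have Hu : ∀ i j x, DifferentiableAt ℝ (pd j (fun z => u z i)) x := fun i j x =>
    ((hdu1 i j).differentiable one_ne_zero) x
  set F : Fin 3 → Fin 3 → (Fin 3 → ℝ) → ℝ :=
    fun i j y => pd i q y * (ν y * pd j (fun z => u z i) y) with hFdef
  set G : Fin 3 → Fin 3 → (Fin 3 → ℝ) → ℝ :=
    fun i j y => pd j q y * (ν y * pd j (fun z => u z i) y) with hGdef
  have hF1 : ∀ i j, ContDiff ℝ 1 (F i j) := fun i j => (hdq1 i).mul (hν.mul (hdu1 i j))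
  have hG1 : ∀ i j, ContDiff ℝ 1 (G i j) := fun i j => (hdq1 j).mul (hν.mul (hdu1 i j))
  have hcsin : ∀ i j, HasCompactSupport (fun y => ν y * pd j (fun z => u z i) y) := fun i j =>
    HasCompactSupport.mul_left (hasCompactSupport_pd (hcsu i) j)
  have hFcs : ∀ i j, HasCompactSupport (F i j) := fun i j =>
    HasCompactSupport.mul_left (hcsin i j)
  have hGcs : ∀ i j, HasCompactSupport (G i j) := fun i j =>
    HasCompactSupport.mul_left (hcsin i j)
  have hintF : ∀ i j, ∫ x, pd j (F i j) x = 0 := fun i j =>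
    integral_pd_eq_zero (hF1 i j) (hFcs i j) j
  have hintG : ∀ i j, ∫ x, pd i (G i j) x = 0 := fun i j =>
    integral_pd_eq_zero (hG1 i j) (hGcs i j) i
  have hdiv2 : ∀ i x, ∑ j, pd j (pd i (fun z => u z j)) x = 0 := by
    intro i x
    have h1 : ∑ j, pd j (pd i (fun z => u z j)) x = ∑ j, pd i (pd j (fun z => u z j)) x :=
      Finset.sum_congr rfl fun j _ => pd_comm (hui j) j i x
    rw [h1, ← pd_sum Finset.univ i (fun j _ => Hu j j x)]
    have h2 : (fun y => ∑ j, pd j (fun z => u z j) y) = fun _ => (0 : ℝ) :=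
      funext fun y => hdiv y
    rw [h2]
    simp [pd]
  -- pointwise expansion identity
  have key : ∀ x, (∑ i, pd i q x *
        (∑ j, pd j (fun y => ν y * (pd j (fun z => u z i) y + pd i (fun z => u z j) y)) x))
      = (∑ i, pd i q x * (2 * ∑ j, pd i (fun z => u z j) x * pd j ν x))
        + ∑ i, ∑ j, (pd j (F i j) x - pd i (G i j) x) := by
    intro x
    have h1 : ∀ i j, pd j (fun y => ν y *
          (pd j (fun z => u z i) y + pd i (fun z => u z j) y)) x
        = pd j ν x * (pd j (fun z => u z i) x + pd i (fun z => u z j) x)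
          + ν x * (pd j (pd j (fun z => u z i)) x + pd j (pd i (fun z => u z j)) x) := by
      intro i j
      rw [pd_mul j (Hν x) ((Hu i j x).fun_add (Hu j i x)), pd_add j (Hu i j x) (Hu j i x)]
    have h2 : ∀ i j, pd j (F i j) x
        = pd j (pd i q) x * (ν x * pd j (fun z => u z i) x)
          + pd i q x * (pd j ν x * pd j (fun z => u z i) x
            + ν x * pd j (pd j (fun z => u z i)) x) := by
      intro i j
      show pd j (fun y => pd i q y * (ν y * pd j (fun z => u z i) y)) x = _
      rw [pd_mul j (Hq i x) ((Hν x).fun_mul (Hu i j x)), pd_mul j (Hν x) (Hu i j x)]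
    have h3 : ∀ i j, pd i (G i j) x
        = pd j (pd i q) x * (ν x * pd j (fun z => u z i) x)
          + pd j q x * (pd i ν x * pd j (fun z => u z i) x
            + ν x * pd i (pd j (fun z => u z i)) x) := by
      intro i j
      show pd i (fun y => pd j q y * (ν y * pd j (fun z => u z i) y)) x = _
      rw [pd_mul i (Hq j x) ((Hν x).fun_mul (Hu i j x)), pd_mul i (Hν x) (Hu i j x),
        pd_comm hq i j x]
    have hFG : ∀ i j, pd j (F i j) x - pd i (G i j) x
        = (pd i q x * (pd j ν x * pd j (fun z => u z i) x
              + ν x * pd j (pd j (fun z => u z i)) x))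
          - (pd j q x * (pd i ν x * pd j (fun z => u z i) x
              + ν x * pd i (pd j (fun z => u z i)) x)) := by
      intro i j
      rw [h2 i j, h3 i j]
      ring
    have hswap : ∑ i, ∑ j, (pd j q x * (pd i ν x * pd j (fun z => u z i) x
          + ν x * pd i (pd j (fun z => u z i)) x))
        = ∑ i, ∑ j, (pd i q x * (pd j ν x * pd i (fun z => u z j) x
          + ν x * pd j (pd i (fun z => u z j)) x)) := Finset.sum_comm
    have hzero : ∑ i, ∑ j, (2 * (pd i q x * (ν x * pd j (pd i (fun z => u z j)) x))) = 0 := by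
      refine Finset.sum_eq_zero fun i _ => ?_
      simp only [← Finset.mul_sum]
      rw [hdiv2 i x]
      ring
    calc (∑ i, pd i q x *
          (∑ j, pd j (fun y => ν y * (pd j (fun z => u z i) y + pd i (fun z => u z j) y)) x))
        = ∑ i, ∑ j, pd i q x *
            pd j (fun y => ν y * (pd j (fun z => u z i) y + pd i (fun z => u z j) y)) x := by
          exact Finset.sum_congr rfl fun i _ => Finset.mul_sum _ _ _
      _ = ∑ i, ∑ j, ((pd i q x * (2 * (pd i (fun z => u z j) x * pd j ν x)))
            + ((pd i q x * (pd j ν x * pd j (fun z => u z i) x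
                  + ν x * pd j (pd j (fun z => u z i)) x))
              - (pd i q x * (pd j ν x * pd i (fun z => u z j) x
                  + ν x * pd j (pd i (fun z => u z j)) x)))
            + 2 * (pd i q x * (ν x * pd j (pd i (fun z => u z j)) x))) := by
          refine Finset.sum_congr rfl fun i _ => Finset.sum_congr rfl fun j _ => ?_
          rw [h1 i j]
          ring
      _ = (∑ i, ∑ j, (pd i q x * (2 * (pd i (fun z => u z j) x * pd j ν x))))
            + ((∑ i, ∑ j, ((pd i q x * (pd j ν x * pd j (fun z => u z i) x
                  + ν x * pd j (pd j (fun z => u z i)) x))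
              - (pd i q x * (pd j ν x * pd i (fun z => u z j) x
                  + ν x * pd j (pd i (fun z => u z j)) x))))
            + ∑ i, ∑ j, (2 * (pd i q x * (ν x * pd j (pd i (fun z => u z j)) x)))) := by
          simp only [Finset.sum_add_distrib, Finset.sum_sub_distrib]
          ring
      _ = (∑ i, pd i q x * (2 * ∑ j, pd i (fun z => u z j) x * pd j ν x))
            + ∑ i, ∑ j, (pd j (F i j) x - pd i (G i j) x) := by
          rw [hzero, add_zero]
          congr 1
          · refine Finset.sum_congr rfl fun i _ => ?_
            simp only [Finset.mul_sum]
          · simp only [hFG, Finset.sum_sub_distrib]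
            rw [hswap]
  -- integrability
  have hRHScont : Continuous (fun x => ∑ i, pd i q x *
      (2 * ∑ j, pd i (fun z => u z j) x * pd j ν x)) := by
    refine continuous_finset_sum _ fun i _ => ((hdq1 i).continuous).mul
      (continuous_const.mul (continuous_finset_sum _ fun j _ =>
        ((contDiff_pd (n := 1) (hui j) i).continuous).mul
          ((contDiff_pd (n := 0) hν j).continuous)))
  have hRHScs : HasCompactSupport (fun x => ∑ i, pd i q x *
      (2 * ∑ j, pd i (fun z => u z j) x * pd j ν x)) := by
    refine hasCompactSupport_sum _ fun i _ => ?_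
    have hin : HasCompactSupport (fun x => ∑ j, pd i (fun z => u z j) x * pd j ν x) :=
      hasCompactSupport_sum _ fun j _ => (hasCompactSupport_pd (hcsu j) i).mul_right
    exact HasCompactSupport.mul_left (HasCompactSupport.mul_left hin)
  have hRHSint : Integrable (fun x => ∑ i, pd i q x *
      (2 * ∑ j, pd i (fun z => u z j) x * pd j ν x)) :=
    hRHScont.integrable_of_hasCompactSupport hRHScs
  have hFint : ∀ i j, Integrable (fun x => pd j (F i j) x) := fun i j =>
    ((contDiff_pd (n := 0) (hF1 i j) j).continuous).integrable_of_hasCompactSupport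
      (hasCompactSupport_pd (hFcs i j) j)
  have hGint : ∀ i j, Integrable (fun x => pd i (G i j) x) := fun i j =>
    ((contDiff_pd (n := 0) (hG1 i j) i).continuous).integrable_of_hasCompactSupport
      (hasCompactSupport_pd (hGcs i j) i)
  have hCorrInt : Integrable (fun x => ∑ i, ∑ j, (pd j (F i j) x - pd i (G i j) x)) :=
    integrable_finset_sum _ fun i _ => integrable_finset_sum _ fun j _ =>
      (hFint i j).sub (hGint i j)
  calc (∫ x, ∑ i, pd i q x *
        (∑ j, pd j (fun y => ν y * (pd j (fun z => u z i) y + pd i (fun z => u z j) y)) x))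
      = ∫ x, ((∑ i, pd i q x * (2 * ∑ j, pd i (fun z => u z j) x * pd j ν x))
          + ∑ i, ∑ j, (pd j (F i j) x - pd i (G i j) x)) := by
        exact integral_congr_ae (Filter.Eventually.of_forall key)
    _ = (∫ x, ∑ i, pd i q x * (2 * ∑ j, pd i (fun z => u z j) x * pd j ν x))
          + ∫ x, ∑ i, ∑ j, (pd j (F i j) x - pd i (G i j) x) :=
        integral_add hRHSint hCorrInt
    _ = ∫ x, ∑ i, pd i q x * (2 * ∑ j, pd i (fun z => u z j) x * pd j ν x) := by
        have h1 : ∀ i j, (∫ x, (pd j (F i j) x - pd i (G i j) x)) = 0 := by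
          intro i j
          rw [integral_sub (hFint i j) (hGint i j), hintF i j, hintG i j, sub_zero]
        have h0 : (∫ x, ∑ i, ∑ j, (pd j (F i j) x - pd i (G i j) x)) = 0 :=
          calc (∫ x, ∑ i, ∑ j, (pd j (F i j) x - pd i (G i j) x))
              = ∑ i, ∫ x, ∑ j, (pd j (F i j) x - pd i (G i j) x) :=
                integral_finset_sum _ (fun i _ => integrable_finset_sum _ fun j _ =>
                  (hFint i j).sub (hGint i j))
            _ = ∑ i, ∑ j, ∫ x, (pd j (F i j) x - pd i (G i j) x) :=
                Finset.sum_congr rfl fun i _ =>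
                  integral_finset_sum _ (fun j _ => (hFint i j).sub (hGint i j))
            _ = 0 := by simp [h1]
        rw [h0, add_zero]
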